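/- Hitting time of full capacity for the lower envelope (Lemma D.1): fix p ∈ {1,…,I} and assume δ_p := λ_p − μ(Σ_{i=1}^{p} C_i − 1) > 0. Let [m_s, M_s] = F([0, C], u_1⋯u_s) be the aggregated-envelope trajectory started from the bottom state 0 = (0,…,0) and the top state C = (C_1,…,C_I), and let τ^{(p)} = min{t ≥ 0 : (m_t)_p = C_p} be the first time the p-th component of the lower envelope hits C_p. Then E[τ^{(p)}] ≤ Λ C_p/δ_p. -/

import Mathlib

/-!
Let `Z_t` be the `p`-th coordinate of the lower envelope stopped at `τ = τ^{(p)}`. While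
`m_p < C_p`, one envelope step raises `m_p` by one on every arrival `d_A` with `p ∈ A` (total
rate `λ_p`), and lowers it by at most one, and only on the returns `r_j^i` with `i < p`, or
`i = p` and `j < C_p`: these are `∑_{i ≤ p} C_i - 1` of the `|C|` returns. Hence
`E[Z_{t+1} - Z_t | u_1, …, u_t] ≥ (δ_p / Λ) 1{τ > t}`, so
`(δ_p / Λ) ∑_{t < T} P(τ > t) ≤ E[Z_T] ≤ C_p` for every `T`, and
`E[τ] = ∑_t P(τ > t) ≤ Λ C_p / δ_p`.
-/

open MeasureTheory Finset ENNReal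

namespace ATO

/-- Events: joint arrivals `d A` for subsets `A`, and joint-return services `s i j = r_j^i`. -/
inductive Ev (I : ℕ) where
  | d : Finset (Fin I) → Ev I
  | s : Fin I → ℕ → Ev I

instance (I : ℕ) : MeasurableSpace (Ev I) := ⊤

/-- Valid events: arrivals for nonempty `A`, services `r_j^i` with `1 ≤ j ≤ C i`. -/
def ValidEv {I : ℕ} (C : Fin I → ℕ) : Ev I → Prop
  | .d A => A.Nonempty
  | .s i j => 1 ≤ j ∧ j ≤ C i

/-- The detailed state space `N`: coordinates indexed by the nonempty subsets `A`
(the `∅` coordinate is forced to `0`), with `∑_{A ∋ i} n_A ≤ C_i` for every `i`. -/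
def Nspace {I : ℕ} (C : Fin I → ℕ) : Set (Finset (Fin I) → ℕ) :=
  {n | n ∅ = 0 ∧ ∀ i, (∑ A ∈ Finset.univ.filter (fun A => i ∈ A), n A) ≤ C i}

/-- The projection `ψ : N → X`, `ψ(n)_i = ∑_{A ∋ i} n_A`. -/
def psi {I : ℕ} (n : Finset (Fin I) → ℕ) : Fin I → ℕ :=
  fun i => ∑ A ∈ Finset.univ.filter (fun A => i ∈ A), n A

/-- The projected state space `X = {0,…,C 1} × ⋯ × {0,…,C I}`. -/
def Xspace {I : ℕ} (C : Fin I → ℕ) : Set (Fin I → ℕ) := {x | ∀ i, x i ≤ C i}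

/-- The enumeration `A_k^i` of the subsets of `{i,…,I}` containing `i` (0-based indices):
an element `t > i` belongs to `A_k^i` iff the binary digit of `k` in position `I - 1 - t`
vanishes. -/
def Aset {I : ℕ} (i : Fin I) (k : ℕ) : Finset (Fin I) :=
  Finset.univ.filter (fun t => t = i ∨ (i < t ∧ Nat.testBit k (I - 1 - t.val) = false))

/-- Partial sums `∑_{ℓ=0}^{k-1} n_{A_ℓ^i}`. -/
def psum {I : ℕ} (i : Fin I) (n : Finset (Fin I) → ℕ) (k : ℕ) : ℕ :=
  ∑ l ∈ Finset.range k, n (Aset i l)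

/-- The transition function `f̃` of the detailed chain: a demand `d A` adds `ε_{A^{(n)}}`
where `A^{(n)} = {i ∈ A : ψ(n)_i < C_i}` (no change if `A^{(n)} = ∅`); a service `r_j^i`
removes `ε_{A_k^i}` for the minimal `k` with `∑_{ℓ=0}^{k} n_{A_ℓ^i} ≥ j`, if
`∑_{ℓ} n_{A_ℓ^i} ≥ j`, and otherwise does nothing. -/
noncomputable def ftil {I : ℕ} (C : Fin I → ℕ) (n : Finset (Fin I) → ℕ) :
    Ev I → (Finset (Fin I) → ℕ)
  | .d A => fun B =>
      n B + if B = A.filter (fun i => psi n i < C i) ∧ B.Nonempty then 1 else 0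
  | .s i j => fun B =>
      n B - if j ≤ psum i n (2 ^ (I - 1 - i.val))
              ∧ B = Aset i (sInf {k | j ≤ psum i n (k + 1)}) then 1 else 0

/-- The supremum chain `f̄` on `X` (componentwise supremum over all detailed states
projecting to `x`). -/
noncomputable def fbar {I : ℕ} (C : Fin I → ℕ) (x : Fin I → ℕ) (a : Ev I) : Fin I → ℕ :=
  fun p => sSup ((fun n => psi (ftil C n a) p) '' {n | n ∈ Nspace C ∧ psi n = x})

/-- The infimum chain `f_inf` on `X` (componentwise infimum over all detailed states
projecting to `x`). -/
noncomputable def finf {I : ℕ} (C : Fin I → ℕ) (x : Fin I → ℕ) (a : Ev I) : Fin I → ℕ :=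
  fun p => sInf ((fun n => psi (ftil C n a) p) '' {n | n ∈ Nspace C ∧ psi n = x})

/-- One step of the aggregated envelope chain `F([m,M],a)`. -/
noncomputable def Fenv {I : ℕ} (C : Fin I → ℕ) (m M : Fin I → ℕ) (a : Ev I) :
    (Fin I → ℕ) × (Fin I → ℕ) :=
  (fun p => sInf ((fun x => finf C x a p) '' Set.Icc m M),
   fun p => sSup ((fun x => fbar C x a p) '' Set.Icc m M))

/-- Iteration of the aggregated envelope chain along a word (head applied first). -/
noncomputable def FenvIter {I : ℕ} (C : Fin I → ℕ) :
    (Fin I → ℕ) → (Fin I → ℕ) → List (Ev I) → (Fin I → ℕ) × (Fin I → ℕ)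
  | m, M, [] => (m, M)
  | m, M, a :: w => FenvIter C (Fenv C m M a).1 (Fenv C m M a).2 w

/-- Iterated application of a transition function along a word (head applied first). -/
def iter {I : ℕ} {σ : Type*} (f : σ → Ev I → σ) : σ → List (Ev I) → σ
  | x, [] => x
  | x, a :: w => iter f (f x a) w

/-- The backward word `u_t u_{t-1} ⋯ u_1` (with `u_t` applied first). -/
def bword {I : ℕ} (ω : ℕ → Ev I) (t : ℕ) : List (Ev I) :=
  ((List.range t).reverse).map fun s => ω (s + 1)

/-- The forward word `u_1 u_2 ⋯ u_t` (with `u_1` applied first). -/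
def fword {I : ℕ} (ω : ℕ → Ev I) (t : ℕ) : List (Ev I) :=
  (List.range t).map fun s => ω (s + 1)

/-- The "hat" operation `x̂_i = max{x_i − (x_1 + ⋯ + x_{i-1}), 0}`. -/
def xhat {I : ℕ} (x : Fin I → ℕ) (i : Fin I) : ℕ :=
  x i - ∑ t ∈ Finset.univ.filter (fun t => t < i), x t

/-- The distribution `ν` on events: `ν (d A) = λ_A / Λ` and `ν (r_j^i) = μ / Λ`. -/
noncomputable def probJ {I : ℕ} (C : Fin I → ℕ) (lam : Finset (Fin I) → ℝ) (μv Λ : ℝ) :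
    Ev I → ℝ≥0∞
  | .d A => if A.Nonempty then ENNReal.ofReal (lam A / Λ) else 0
  | .s i j => if 1 ≤ j ∧ j ≤ C i then ENNReal.ofReal (μv / Λ) else 0

variable {I : ℕ}

section DetailedChain

variable (C : Fin I → ℕ) (n : Finset (Fin I) → ℕ)

theorem psi_ftil_d (A : Finset (Fin I)) (q : Fin I) :
    psi (ftil C n (.d A)) q = psi n q +
      if q ∈ A.filter (fun i => psi n i < C i) ∧ (A.filter (fun i => psi n i < C i)).Nonempty
      then 1 else 0 := by
  set A' := A.filter (fun i => psi n i < C i)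
  change ∑ B ∈ univ.filter (q ∈ ·), (n B + if B = A' ∧ B.Nonempty then 1 else 0) = _
  rw [Finset.sum_add_distrib]
  congr 1
  have hcond : ∀ B, (B = A' ∧ B.Nonempty) ↔ (B = A' ∧ A'.Nonempty) := by
    rintro B; constructor <;> rintro ⟨rfl, h⟩ <;> exact ⟨rfl, h⟩
  simp_rw [hcond, ite_and, Finset.sum_ite_eq']
  simp

theorem min_le_psi_ftil_d (A : Finset (Fin I)) (q : Fin I) :
    min (psi n q + if q ∈ A then 1 else 0) (C q) ≤ psi (ftil C n (.d A)) q := by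
  rw [psi_ftil_d]
  by_cases hq : q ∈ A ∧ psi n q < C q
  · rw [if_pos hq.1, if_pos ⟨Finset.mem_filter.2 hq, ⟨q, Finset.mem_filter.2 hq⟩⟩]
    exact min_le_left _ _
  · refine le_trans ?_ (Nat.le_add_right _ _)
    by_cases hqA : q ∈ A
    · have := not_lt.1 fun h => hq ⟨hqA, h⟩
      rw [if_pos hqA]
      omega
    · simp [hqA]

theorem psi_ftil_s_le (i : Fin I) (j : ℕ) (q : Fin I) :
    psi (ftil C n (.s i j)) q ≤ psi n q :=
  Finset.sum_le_sum fun _ _ => Nat.sub_le _ _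

theorem psi_le_psi_ftil_s_add_one (i : Fin I) (j : ℕ) (q : Fin I) :
    psi n q ≤ psi (ftil C n (.s i j)) q + 1 := by
  set K := Aset i (sInf {k | j ≤ psum i n (k + 1)})
  calc psi n q
      ≤ ∑ B ∈ univ.filter (q ∈ ·),
          ((n B - if j ≤ psum i n (2 ^ (I - 1 - i.val)) ∧ B = K then 1 else 0)
            + if B = K then 1 else 0) :=
        Finset.sum_le_sum fun B _ => by
          by_cases hB : B = K
          · simp only [hB, and_true]
            split_ifs <;> omega
          · simp [hB]
    _ ≤ psi (ftil C n (.s i j)) q + 1 := by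
        rw [Finset.sum_add_distrib, Finset.sum_ite_eq']
        exact add_le_add le_rfl (by split_ifs <;> simp)

theorem mem_Aset_iff_testBit {i t : Fin I} (hit : i < t) (k : ℕ) :
    t ∈ Aset i k ↔ Nat.testBit k (I - 1 - t.val) = false := by
  simp [Aset, hit, hit.ne']

theorem notMem_Aset_of_lt {q i : Fin I} (h : q < i) (k : ℕ) : q ∉ Aset i k := by
  simp [Aset, h.ne, h.not_gt]

theorem Aset_injOn (i : Fin I) : Set.InjOn (Aset i) (Set.Iio (2 ^ (I - 1 - i.val))) := by
  intro l₁ h₁ l₂ h₂ h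
  refine Nat.eq_of_testBit_eq fun b => ?_
  by_cases hb : b < I - 1 - i.val
  · set t : Fin I := ⟨I - 1 - b, by omega⟩
    have hit : i < t := Fin.lt_def.2 (by simp only [t]; omega)
    have htb : I - 1 - t.val = b := by simp only [t]; omega
    have := mem_Aset_iff_testBit hit l₁
    rw [h, mem_Aset_iff_testBit hit, htb] at this
    cases hb₁ : l₁.testBit b <;> cases hb₂ : l₂.testBit b <;> simp_all
  · have hpow : 2 ^ (I - 1 - i.val) ≤ 2 ^ b := Nat.pow_le_pow_right two_pos (by omega)
    rw [Nat.testBit_lt_two_pow (lt_of_lt_of_le h₁ hpow),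
      Nat.testBit_lt_two_pow (lt_of_lt_of_le h₂ hpow)]

theorem psum_le_psi (i : Fin I) : psum i n (2 ^ (I - 1 - i.val)) ≤ psi n i := by
  classical
  rw [psum, ← Finset.sum_image fun l₁ h₁ l₂ h₂ =>
    Aset_injOn i (Finset.mem_range.1 h₁) (Finset.mem_range.1 h₂)]
  refine Finset.sum_le_sum_of_subset fun B hB => ?_
  obtain ⟨l, -, rfl⟩ := Finset.mem_image.1 hB
  simp [Aset]

theorem ftil_s_of_psi_lt {i : Fin I} {j : ℕ} (h : psi n i < j) : ftil C n (.s i j) = n := by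
  funext B
  have := psum_le_psi n i
  simp only [ftil]
  rw [if_neg (by omega)]
  rfl

theorem psi_ftil_s_of_lt {q i : Fin I} (h : q < i) (j : ℕ) :
    psi (ftil C n (.s i j)) q = psi n q := by
  refine Finset.sum_congr rfl fun B hB => ?_
  have hqB : q ∈ B := (Finset.mem_filter.1 hB).2
  simp only [ftil]
  rw [if_neg (by rintro ⟨-, rfl⟩; exact notMem_Aset_of_lt h _ hqB)]
  rfl

theorem min_le_psi_ftil_s (i : Fin I) (j : ℕ) :
    min (psi n i) (j - 1) ≤ psi (ftil C n (.s i j)) i := by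
  by_cases h : psi n i < j
  · rw [ftil_s_of_psi_lt C n h]; exact min_le_left _ _
  · have := psi_le_psi_ftil_s_add_one C n i j i
    omega

end DetailedChain

section StateSpace

theorem ftil_mem_Nspace (C : Fin I → ℕ) {n : Finset (Fin I) → ℕ} (hn : n ∈ Nspace C)
    (e : Ev I) : ftil C n e ∈ Nspace C := by
  obtain ⟨h0, hcap⟩ := hn
  cases e with
  | d A =>
    refine ⟨by simp [ftil, h0], fun q => ?_⟩
    change psi (ftil C n (.d A)) q ≤ C q
    rw [psi_ftil_d]
    split_ifs with hq
    · exact (Finset.mem_filter.1 hq.1).2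
    · exact hcap q
  | s i j => exact ⟨by simp [ftil, h0], fun q => (psi_ftil_s_le C n i j q).trans (hcap q)⟩

def singletonState (x : Fin I → ℕ) : Finset (Fin I) → ℕ :=
  fun B => ∑ q, if B = {q} then x q else 0

theorem psi_singletonState (x : Fin I → ℕ) : psi (singletonState x) = x := by
  funext q
  simp [psi, singletonState, Finset.sum_comm (s := univ.filter (q ∈ ·)), Finset.sum_ite_eq']

theorem singletonState_mem_Nspace (C : Fin I → ℕ) {x : Fin I → ℕ} (hx : x ≤ C) :
    singletonState x ∈ Nspace C :=
  ⟨by simp [singletonState], fun i => (congrFun (psi_singletonState x) i).trans_le (hx i)⟩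

end StateSpace

section Envelope

variable {C : Fin I → ℕ}

theorem psi_fiber_nonempty {x : Fin I → ℕ} (hx : x ≤ C) :
    {n | n ∈ Nspace C ∧ psi n = x}.Nonempty :=
  ⟨singletonState x, singletonState_mem_Nspace C hx, psi_singletonState x⟩

theorem fbar_le (x : Fin I → ℕ) (e : Ev I) : fbar C x e ≤ C := fun q =>
  csSup_le' <| by
    rintro _ ⟨n, ⟨hn, -⟩, rfl⟩
    exact (ftil_mem_Nspace C hn e).2 q

theorem finf_le_fbar {x : Fin I → ℕ} (hx : x ≤ C) (e : Ev I) : finf C x e ≤ fbar C x e := by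
  intro q
  obtain ⟨n, hn⟩ := psi_fiber_nonempty hx
  have hmem : psi (ftil C n e) q ∈
      (fun n => psi (ftil C n e) q) '' {n | n ∈ Nspace C ∧ psi n = x} := ⟨n, hn, rfl⟩
  refine (csInf_le (OrderBot.bddBelow _) hmem).trans (le_csSup ⟨C q, ?_⟩ hmem)
  rintro _ ⟨n, ⟨hn, -⟩, rfl⟩
  exact (ftil_mem_Nspace C hn e).2 q

theorem le_Fenv_fst {m M : Fin I → ℕ} (hmM : m ≤ M) (hMC : M ≤ C) {e : Ev I} {q : Fin I}
    {c : ℕ} (h : ∀ n ∈ Nspace C, m q ≤ psi n q → c ≤ psi (ftil C n e) q) :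
    c ≤ (Fenv C m M e).1 q := by
  refine le_csInf ⟨_, m, ⟨le_rfl, hmM⟩, rfl⟩ ?_
  rintro _ ⟨x, hx, rfl⟩
  refine le_csInf ((psi_fiber_nonempty (hx.2.trans hMC)).image _) ?_
  rintro _ ⟨n, ⟨hn, rfl⟩, rfl⟩
  exact h n hn (hx.1 q)

theorem Fenv_snd_le (m M : Fin I → ℕ) (e : Ev I) : (Fenv C m M e).2 ≤ C := fun q =>
  csSup_le' <| by
    rintro _ ⟨x, -, rfl⟩
    exact fbar_le x e q

theorem Fenv_fst_le_snd {m M : Fin I → ℕ} (hmM : m ≤ M) (hMC : M ≤ C) (e : Ev I) :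
    (Fenv C m M e).1 ≤ (Fenv C m M e).2 := fun q =>
  calc (Fenv C m M e).1 q
      ≤ finf C m e q := csInf_le (OrderBot.bddBelow _) ⟨m, ⟨le_rfl, hmM⟩, rfl⟩
    _ ≤ fbar C m e q := finf_le_fbar (hmM.trans hMC) e q
    _ ≤ (Fenv C m M e).2 q := by
        refine le_csSup ⟨C q, ?_⟩ ⟨m, ⟨le_rfl, hmM⟩, rfl⟩
        rintro _ ⟨x, -, rfl⟩
        exact fbar_le x e q

theorem FenvIter_le {m M : Fin I → ℕ} (hmM : m ≤ M) (hMC : M ≤ C) (w : List (Ev I)) :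
    (FenvIter C m M w).1 ≤ (FenvIter C m M w).2 ∧ (FenvIter C m M w).2 ≤ C := by
  induction w generalizing m M with
  | nil => exact ⟨hmM, hMC⟩
  | cons e w ih => exact ih (Fenv_fst_le_snd hmM hMC e) (Fenv_snd_le m M e)

theorem FenvIter_zero_fst_le (w : List (Ev I)) : (FenvIter C 0 C w).1 ≤ C :=
  have h := FenvIter_le (fun _ => Nat.zero_le _) le_rfl w
  h.1.trans h.2

theorem FenvIter_append (m M : Fin I → ℕ) (w w' : List (Ev I)) :
    FenvIter C m M (w ++ w') = FenvIter C (FenvIter C m M w).1 (FenvIter C m M w).2 w' := by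
  induction w generalizing m M with
  | nil => rfl
  | cons e w ih => exact ih _ _

end Envelope

section EventDistribution

def Ev.equivSum : Ev I ≃ Finset (Fin I) ⊕ (Fin I × ℕ) where
  toFun
    | .d A => .inl A
    | .s i j => .inr (i, j)
  invFun
    | .inl A => .d A
    | .inr ij => .s ij.1 ij.2
  left_inv e := by cases e <;> rfl
  right_inv x := by rcases x with A | ⟨i, j⟩ <;> rfl

instance : Countable (Ev I) := Countable.of_equiv _ Ev.equivSum.symm

instance : DiscreteMeasurableSpace (Ev I) := ⟨fun _ => MeasurableSpace.measurableSet_top⟩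

variable (C : Fin I → ℕ) (lam : Finset (Fin I) → ℝ) (μv Λ : ℝ)

theorem tsum_probJ_mul (g : Ev I → ℝ≥0∞) :
    ∑' e, probJ C lam μv Λ e * g e =
      ∑ A ∈ univ.filter Finset.Nonempty, ENNReal.ofReal (lam A / Λ) * g (.d A)
        + ENNReal.ofReal (μv / Λ) * ∑ i, ∑ j ∈ Icc 1 (C i), g (.s i j) := by
  rw [← Ev.equivSum.symm.tsum_eq, ENNReal.summable.tsum_sum ENNReal.summable, tsum_fintype]
  simp only [Ev.equivSum, Equiv.coe_fn_symm_mk]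
  rw [ENNReal.tsum_prod (f := fun i j => probJ C lam μv Λ (.s i j) * g (.s i j)), tsum_fintype,
    Finset.sum_filter, Finset.mul_sum]
  congr 1
  · refine Finset.sum_congr rfl fun A _ => ?_
    simp [probJ, ite_mul]
  · refine Finset.sum_congr rfl fun i _ => ?_
    rw [tsum_eq_sum (s := Icc 1 (C i)) fun j hj => ?_, Finset.mul_sum]
    · refine Finset.sum_congr rfl fun j hj => ?_
      simp [probJ, Finset.mem_Icc.1 hj]
    · simp [probJ, Finset.mem_Icc.not.1 hj]

end EventDistribution

section Drift

def arrivalInd (q : Fin I) : Ev I → ℕ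
  | .d A => if q ∈ A then 1 else 0
  | .s _ _ => 0

def lossInd (C : Fin I → ℕ) (q : Fin I) : Ev I → ℕ
  | .d _ => 0
  | .s i j => if i < q ∨ (i = q ∧ j < C q) then 1 else 0

variable {C : Fin I → ℕ} {m M : Fin I → ℕ}

theorem add_arrivalInd_le_Fenv_fst_add_lossInd (hmM : m ≤ M) (hMC : M ≤ C) {q : Fin I}
    (hmq : m q < C q) (e : Ev I) : m q + arrivalInd q e ≤ (Fenv C m M e).1 q + lossInd C q e := by
  cases e with
  | d A =>
    refine Nat.le_add_right_of_le (le_Fenv_fst hmM hMC fun n _ hn => ?_)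
    have := min_le_psi_ftil_d C n A q
    simp only [arrivalInd] at this ⊢
    split_ifs at this ⊢ <;> omega
  | s i j =>
    simp only [arrivalInd, lossInd, add_zero]
    split_ifs with hloss
    · have : m q - 1 ≤ (Fenv C m M (.s i j)).1 q := le_Fenv_fst hmM hMC fun n _ hn => by
        have := psi_le_psi_ftil_s_add_one C n i j q
        omega
      omega
    · refine le_Fenv_fst hmM hMC fun n hn hmn => ?_
      rcases lt_trichotomy i q with hiq | rfl | hqi
      · exact absurd (Or.inl hiq) hloss
      · have := min_le_psi_ftil_s C n i j
        have := hn.2 i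
        omega
      · rw [psi_ftil_s_of_lt C n hqi]
        exact hmn

theorem sum_lossInd_add_one {q : Fin I} (hCq : 1 ≤ C q) :
    (∑ i, ∑ j ∈ Icc 1 (C i), lossInd C q (.s i j)) + 1
      = ∑ t ∈ univ.filter (· ≤ q), C t := by
  have hrow : ∀ i, (∑ j ∈ Icc 1 (C i), lossInd C q (.s i j)) + (if i = q then 1 else 0)
      = if i ≤ q then C i else 0 := by
    intro i
    rcases lt_trichotomy i q with hiq | rfl | hqi
    · simp [lossInd, hiq, hiq.ne, hiq.le]
    · obtain ⟨k, hk⟩ := Nat.exists_eq_add_of_le' hCq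
      have hfilter : (Icc 1 (k + 1)).filter (· ≤ k) = Icc 1 k := by
        ext j
        simp only [Finset.mem_filter, Finset.mem_Icc]
        omega
      simp [lossInd, hk, Finset.sum_boole, hfilter]
    · simp [lossInd, hqi.not_gt, hqi.ne', hqi.not_ge]
  rw [Finset.sum_filter, ← Finset.sum_congr rfl fun i _ => hrow i, Finset.sum_add_distrib,
    Finset.sum_ite_eq']
  simp

theorem Fenv_fst_drift {lam : Finset (Fin I) → ℝ} (hlam : ∀ A, 0 ≤ lam A) {μv Λ : ℝ}
    (hμv : 0 ≤ μv) (hΛ : 0 < Λ) (hν : ∑' e, probJ C lam μv Λ e = 1) {q : Fin I}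
    {δ : ℝ} (hδ : 0 ≤ δ) (hδq : δ = (∑ A ∈ univ.filter (q ∈ ·), lam A)
      - μv * ((∑ t ∈ univ.filter (· ≤ q), (C t : ℝ)) - 1))
    (hmM : m ≤ M) (hMC : M ≤ C) (hmq : m q < C q) :
    m q + ENNReal.ofReal (δ / Λ) ≤ ∑' e, probJ C lam μv Λ e * (Fenv C m M e).1 q := by
  set ν := probJ C lam μv Λ
  set ℓ := ∑ i, ∑ j ∈ Icc 1 (C i), lossInd C q (.s i j)
  have hℓ : (ℓ : ℝ) = (∑ t ∈ univ.filter (· ≤ q), (C t : ℝ)) - 1 := by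
    rw [eq_sub_iff_add_eq]
    exact_mod_cast sum_lossInd_add_one (C := C) (hmq.trans_le' (Nat.zero_le _))
  have hloss : ∑' e, ν e * lossInd C q e = ENNReal.ofReal (μv / Λ) * ℓ := by
    simp [ν, tsum_probJ_mul, lossInd, ℓ]
  have hgain : ∑' e, ν e * arrivalInd q e
      = ENNReal.ofReal (δ / Λ) + ENNReal.ofReal (μv / Λ) * ℓ := by
    have hsplit : (∑ A ∈ univ.filter (q ∈ ·), lam A) / Λ = δ / Λ + μv / Λ * ℓ := by
      rw [hδq, hℓ]; ring
    rw [← ENNReal.ofReal_natCast, ← ENNReal.ofReal_mul (by positivity),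
      ← ENNReal.ofReal_add (by positivity) (by positivity), ← hsplit, Finset.sum_div,
      ENNReal.ofReal_sum_of_nonneg fun A _ => div_nonneg (hlam A) hΛ.le]
    simp only [ν, tsum_probJ_mul, arrivalInd, Finset.sum_filter, Nat.cast_ite, Nat.cast_one,
      Nat.cast_zero, mul_ite, mul_one, mul_zero, Finset.sum_const_zero, add_zero]
    refine Finset.sum_congr rfl fun A _ => ?_
    rw [← ite_and]
    exact if_congr (and_iff_right_of_imp fun h => ⟨q, h⟩) rfl rfl
  have hstep : ∑' e, ν e * ((m q + arrivalInd q e : ℕ) : ℝ≥0∞)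
      ≤ ∑' e, ν e * (((Fenv C m M e).1 q + lossInd C q e : ℕ) : ℝ≥0∞) :=
    ENNReal.tsum_le_tsum fun e => mul_le_mul' le_rfl
      (Nat.cast_le.2 (add_arrivalInd_le_Fenv_fst_add_lossInd hmM hMC hmq e))
  simp only [Nat.cast_add, mul_add, ENNReal.tsum_add, ENNReal.tsum_mul_right, hν, one_mul,
    hgain, hloss, ← add_assoc] at hstep
  exact (ENNReal.add_le_add_iff_right (by finiteness)).1 hstep

end Drift

section WordMean

variable {α : Type*} (ν : α → ℝ≥0∞)

noncomputable def wordMean (T : ℕ) (H : List α → ℝ≥0∞) : ℝ≥0∞ :=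
  ∑' v : Fin T → α, (∏ i, ν (v i)) * H (List.ofFn v)

theorem wordMean_zero (H : List α → ℝ≥0∞) : wordMean ν 0 H = H [] := by
  simp [wordMean]

theorem wordMean_succ (T : ℕ) (H : List α → ℝ≥0∞) :
    wordMean ν (T + 1) H = wordMean ν T fun w => ∑' e, ν e * H (w ++ [e]) := by
  rw [wordMean, ← (Fin.snocEquiv fun _ => α).tsum_eq]
  simp only [Fin.snocEquiv, Equiv.coe_fn_mk, Fin.prod_univ_castSucc, Fin.snoc_castSucc,
    Fin.snoc_last, List.ofFn_succ', List.concat_eq_append]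
  rw [ENNReal.tsum_prod (f := fun e v => (∏ i, ν (v i)) * ν e * H (List.ofFn v ++ [e])),
    ENNReal.tsum_comm, wordMean]
  simp only [mul_assoc, ENNReal.tsum_mul_left]

variable {ν}

theorem wordMean_mono {T : ℕ} {H H' : List α → ℝ≥0∞} (h : H ≤ H') :
    wordMean ν T H ≤ wordMean ν T H' :=
  ENNReal.tsum_le_tsum fun _ => mul_le_mul' le_rfl (h _)

theorem wordMean_add (T : ℕ) (H H' : List α → ℝ≥0∞) :
    wordMean ν T (H + H') = wordMean ν T H + wordMean ν T H' := by
  simp only [wordMean, Pi.add_apply, mul_add, ENNReal.tsum_add]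

theorem wordMean_const_mul (T : ℕ) (a : ℝ≥0∞) (H : List α → ℝ≥0∞) :
    wordMean ν T (fun w => a * H w) = a * wordMean ν T H := by
  simp only [wordMean, ← ENNReal.tsum_mul_left, mul_left_comm]

theorem wordMean_const (hν : ∑' e, ν e = 1) (T : ℕ) (c : ℝ≥0∞) :
    wordMean ν T (fun _ => c) = c := by
  induction T with
  | zero => exact wordMean_zero ν _
  | succ T ih => simp [wordMean_succ, ENNReal.tsum_mul_right, hν, ih]

theorem add_mul_sum_wordMean_le {Z : List α → ℝ≥0∞} {B : Set (List α)} {a : ℝ≥0∞}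
    (hZ : ∀ w, Z w + a * B.indicator 1 w ≤ ∑' e, ν e * Z (w ++ [e])) (T : ℕ) :
    Z [] + a * ∑ t ∈ range T, wordMean ν t (B.indicator 1) ≤ wordMean ν T Z := by
  induction T with
  | zero => simp [wordMean_zero]
  | succ T ih =>
    calc Z [] + a * ∑ t ∈ range (T + 1), wordMean ν t (B.indicator 1)
        = (Z [] + a * ∑ t ∈ range T, wordMean ν t (B.indicator 1))
            + a * wordMean ν T (B.indicator 1) := by
          rw [Finset.sum_range_succ, mul_add, add_assoc]
      _ ≤ wordMean ν T Z + wordMean ν T (fun w => a * B.indicator 1 w) := by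
          rw [wordMean_const_mul]; gcongr
      _ ≤ wordMean ν (T + 1) Z := by
          rw [← wordMean_add, wordMean_succ]
          exact wordMean_mono hZ

end WordMean

section Sampling

instance (T : ℕ) : DiscreteMeasurableSpace (Fin T → Ev I) :=
  MeasurableSingletonClass.toDiscreteMeasurableSpace

theorem fword_eq_ofFn (ω : ℕ → Ev I) (t : ℕ) :
    fword ω t = List.ofFn fun i : Fin t => ω (i + 1) := by
  rw [List.ofFn_eq_map, fword, ← List.map_coe_finRange_eq_range, List.map_map]
  rfl

theorem length_fword (ω : ℕ → Ev I) (t : ℕ) : (fword ω t).length = t := by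
  simp [fword]

theorem take_fword (ω : ℕ → Ev I) {s t : ℕ} (h : s ≤ t) :
    (fword ω t).take s = fword ω s := by
  simp [fword, ← List.map_take, List.take_range, Nat.min_eq_left h]

theorem measurable_comp_fword {β : Type*} [MeasurableSpace β] (H : List (Ev I) → β) (T : ℕ) :
    Measurable fun ω : ℕ → Ev I => H (fword ω T) := by
  simp only [fword_eq_ofFn]
  exact (Measurable.of_discrete (f := fun v : Fin T → Ev I => H (List.ofFn v))).comp (by fun_prop)

variable {ν : Ev I → ℝ≥0∞} {P : Measure (ℕ → Ev I)}

theorem measure_cylinder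
    (hiid : ∀ (T : Finset ℕ) (u : ℕ → Ev I),
      P {ω | ∀ t ∈ T, ω t = u t} = ∏ t ∈ T, ν (u t)) (T : ℕ) (v : Fin T → Ev I) :
    P {ω | ∀ i : Fin T, ω (i + 1) = v i} = ∏ i, ν (v i) := by
  have hinj : Function.Injective fun i : Fin T => i.val + 1 := fun a b h =>
    Fin.ext (Nat.succ_injective h)
  have := hiid (univ.map ⟨_, hinj⟩) (Function.extend (fun i : Fin T => i.val + 1) v fun _ => .d ∅)
  simp only [Finset.prod_map, Finset.mem_map, Function.Embedding.coeFn_mk, Finset.mem_univ,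
    true_and, forall_exists_index, forall_apply_eq_imp_iff, hinj.extend_apply] at this
  exact this

theorem lintegral_comp_fword
    (hiid : ∀ (T : Finset ℕ) (u : ℕ → Ev I),
      P {ω | ∀ t ∈ T, ω t = u t} = ∏ t ∈ T, ν (u t))
    (T : ℕ) (H : List (Ev I) → ℝ≥0∞) :
    ∫⁻ ω, H (fword ω T) ∂P = wordMean ν T H := by
  have hπ : Measurable fun (ω : ℕ → Ev I) (i : Fin T) => ω (i + 1) := by fun_prop
  simp only [fword_eq_ofFn]
  rw [← lintegral_map (f := fun v => H (List.ofFn v)) Measurable.of_discrete hπ,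
    lintegral_countable', wordMean]
  refine tsum_congr fun v => ?_
  rw [Measure.map_apply hπ (measurableSet_singleton v), mul_comm]
  congr 1
  convert measure_cylinder hiid T v using 2
  ext
  exact funext_iff

theorem tsum_eq_one_of_iid [IsProbabilityMeasure P]
    (hiid : ∀ (T : Finset ℕ) (u : ℕ → Ev I),
      P {ω | ∀ t ∈ T, ω t = u t} = ∏ t ∈ T, ν (u t)) : ∑' e, ν e = 1 := by
  have := lintegral_comp_fword hiid 1 fun _ => 1
  simp only [lintegral_const, measure_univ, mul_one, wordMean_succ, wordMean_zero] at this
  exact this.symm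

end Sampling

section HittingTime

theorem sInf_natCast_le_tsum_indicator (Q : ℕ → Prop) :
    sInf {r : ℝ≥0∞ | ∃ t : ℕ, r = t ∧ Q t}
      ≤ ∑' t, {t | ∀ s ≤ t, ¬ Q s}.indicator 1 t := by
  classical
  by_cases h : ∃ t, Q t
  · have hbefore : ∀ t ∈ range (Nat.find h), t ∈ {t | ∀ s ≤ t, ¬ Q s} :=
      fun t ht s hs => Nat.find_min h (hs.trans_lt (Finset.mem_range.1 ht))
    calc sInf {r : ℝ≥0∞ | ∃ t : ℕ, r = t ∧ Q t}
        ≤ (Nat.find h : ℝ≥0∞) := sInf_le ⟨_, rfl, Nat.find_spec h⟩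
      _ = ∑ t ∈ range (Nat.find h), {t | ∀ s ≤ t, ¬ Q s}.indicator 1 t := by
          rw [Finset.sum_congr rfl fun t ht => Set.indicator_of_mem (hbefore t ht) _]
          simp
      _ ≤ _ := ENNReal.sum_le_tsum _
  · simp only [not_exists] at h
    simp [Set.indicator_of_mem, h]

variable (C : Fin I → ℕ) (p : Fin I)

def notYetFull : Set (List (Ev I)) :=
  {w | ∀ s ≤ w.length, (FenvIter C 0 C (w.take s)).1 p ≠ C p}

open Classical in
noncomputable def stoppedLower (w : List (Ev I)) : ℕ :=
  if w ∈ notYetFull C p then (FenvIter C 0 C w).1 p else C p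

variable {C p}

theorem lower_lt_of_mem_notYetFull {w : List (Ev I)} (hw : w ∈ notYetFull C p) :
    (FenvIter C 0 C w).1 p < C p := by
  have hne := hw w.length le_rfl
  rw [List.take_length] at hne
  exact lt_of_le_of_ne (FenvIter_zero_fst_le w p) hne

theorem append_singleton_mem_notYetFull {w : List (Ev I)} {e : Ev I} :
    w ++ [e] ∈ notYetFull C p ↔
      w ∈ notYetFull C p ∧ (FenvIter C 0 C (w ++ [e])).1 p ≠ C p := by
  constructor
  · intro h
    refine ⟨fun s hs => ?_, ?_⟩
    · simpa [List.take_append_of_le_length hs] using h s (by simp; omega)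
    · have := h (w.length + 1) (by simp)
      rwa [List.take_of_length_le (by simp)] at this
  · rintro ⟨hw, he⟩ s hs
    rcases Nat.lt_or_ge s (w.length + 1) with hs' | hs'
    · rw [List.take_append_of_le_length (by omega)]
      exact hw s (by omega)
    · rw [List.take_of_length_le (by simpa using hs')]
      exact he

theorem stoppedLower_le (w : List (Ev I)) : stoppedLower C p w ≤ C p := by
  unfold stoppedLower
  split_ifs with hw
  · exact (lower_lt_of_mem_notYetFull hw).le
  · exact le_rfl

theorem stoppedLower_drift {ν : Ev I → ℝ≥0∞} (hν : ∑' e, ν e = 1) {a : ℝ≥0∞}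
    (hdrift : ∀ m M : Fin I → ℕ, m ≤ M → M ≤ C → m p < C p →
      m p + a ≤ ∑' e, ν e * (Fenv C m M e).1 p)
    (w : List (Ev I)) :
    stoppedLower C p w + a * (notYetFull C p).indicator 1 w
      ≤ ∑' e, ν e * stoppedLower C p (w ++ [e]) := by
  by_cases hw : w ∈ notYetFull C p
  · obtain ⟨hmM, hMC⟩ := FenvIter_le (C := C) (fun _ => Nat.zero_le _) le_rfl w
    calc (stoppedLower C p w : ℝ≥0∞) + a * (notYetFull C p).indicator 1 w
        = (FenvIter C 0 C w).1 p + a := by simp [stoppedLower, hw]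
      _ ≤ ∑' e, ν e * (FenvIter C 0 C (w ++ [e])).1 p := by
          simp only [FenvIter_append]
          exact hdrift _ _ hmM hMC (lower_lt_of_mem_notYetFull hw)
      _ ≤ ∑' e, ν e * stoppedLower C p (w ++ [e]) := by
          refine ENNReal.tsum_le_tsum fun e => mul_le_mul' le_rfl (Nat.cast_le.2 ?_)
          unfold stoppedLower
          split_ifs with he
          · exact le_rfl
          · exact FenvIter_zero_fst_le _ p
  · have he : ∀ e, w ++ [e] ∉ notYetFull C p := fun e h =>
      hw (append_singleton_mem_notYetFull.1 h).1
    simp [stoppedLower, hw, he, ENNReal.tsum_mul_right, hν]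

theorem sInf_hitting_le_tsum_indicator (ω : ℕ → Ev I) :
    sInf {r : ℝ≥0∞ | ∃ t : ℕ, r = t ∧ (FenvIter C 0 C (fword ω t)).1 p = C p}
      ≤ ∑' t, (notYetFull C p).indicator 1 (fword ω t) := by
  refine (sInf_natCast_le_tsum_indicator _).trans_eq (tsum_congr fun t => ?_)
  have : fword ω t ∈ notYetFull C p ↔
      t ∈ {t | ∀ s ≤ t, ¬ (FenvIter C 0 C (fword ω s)).1 p = C p} := by
    change (∀ s ≤ (fword ω t).length, _) ↔ ∀ s ≤ t, _
    rw [length_fword]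
    exact forall₂_congr fun s hs => by rw [take_fword ω hs]
  by_cases h : fword ω t ∈ notYetFull C p
  · rw [Set.indicator_of_mem h, Set.indicator_of_mem (this.1 h)]; rfl
  · rw [Set.indicator_of_notMem h, Set.indicator_of_notMem (mt this.2 h)]

end HittingTime

theorem stmt19_general (I : ℕ) (C : Fin I → ℕ) (hC : ∀ i, 1 ≤ C i)
    (lam : Finset (Fin I) → ℝ) (hlamnn : ∀ A, 0 ≤ lam A)
    (μv : ℝ) (hμv : 0 < μv)
    (Λ : ℝ) (hΛ : Λ = (∑ A : Finset (Fin I), lam A) + μv * ∑ i, (C i : ℝ))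
    (lamI : Fin I → ℝ)
    (hlamI : ∀ i, lamI i = ∑ A ∈ Finset.univ.filter (fun A => i ∈ A), lam A)
    (P : Measure (ℕ → Ev I)) [IsProbabilityMeasure P]
    (hiid : ∀ (T : Finset ℕ) (u : ℕ → Ev I),
        P {ω | ∀ t ∈ T, ω t = u t} = ∏ t ∈ T, probJ C lam μv Λ (u t))
    (p : Fin I) (δp : ℝ)
    (hδp : δp = lamI p - μv * ((∑ t ∈ Finset.univ.filter (fun t => t ≤ p), (C t : ℝ)) - 1))
    (hδpos : 0 < δp) :
    ∫⁻ ω, sInf {r : ℝ≥0∞ | ∃ t : ℕ, r = t ∧ (FenvIter C 0 C (fword ω t)).1 p = C p} ∂P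
      ≤ ENNReal.ofReal (Λ * (C p : ℝ) / δp) := by
  have hΛ0 : 0 < Λ := by
    have hlam : 0 ≤ ∑ A, lam A := Finset.sum_nonneg fun A _ => hlamnn A
    have hCp : (1 : ℝ) ≤ ∑ i, (C i : ℝ) :=
      le_trans (by exact_mod_cast hC p)
        (Finset.single_le_sum (fun i _ => Nat.cast_nonneg _) (mem_univ p))
    rw [hΛ]; nlinarith
  have hν := tsum_eq_one_of_iid hiid
  set a := ENNReal.ofReal (δp / Λ)
  have ha : a ≠ 0 := by simpa [a] using div_pos hδpos hΛ0
  have hrate : ∀ T,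
      (∑ t ∈ range T, wordMean (probJ C lam μv Λ) t ((notYetFull C p).indicator 1)) * a
        ≤ C p := fun T =>
    calc _ ≤ stoppedLower C p [] + a * _ := by rw [mul_comm]; exact le_add_self
      _ ≤ wordMean (probJ C lam μv Λ) T (fun w => stoppedLower C p w) :=
          add_mul_sum_wordMean_le (stoppedLower_drift hν fun m M hmM hMC hmp =>
            Fenv_fst_drift hlamnn hμv.le hΛ0 hν hδpos.le (by rw [hδp, hlamI]) hmM hMC hmp) T
      _ ≤ wordMean (probJ C lam μv Λ) T (fun _ => C p) :=
          wordMean_mono fun w => Nat.cast_le.2 (stoppedLower_le w)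
      _ = C p := wordMean_const hν T _
  calc _ ≤ ∫⁻ ω, ∑' t, (notYetFull C p).indicator 1 (fword ω t) ∂P :=
        lintegral_mono fun ω => sInf_hitting_le_tsum_indicator ω
    _ = ∑' t, wordMean (probJ C lam μv Λ) t ((notYetFull C p).indicator 1) := by
        rw [lintegral_tsum fun t => (measurable_comp_fword _ t).aemeasurable]
        simp_rw [lintegral_comp_fword hiid]
    _ ≤ C p / a := ENNReal.tsum_le_of_sum_range_le fun T =>
        (ENNReal.le_div_iff_mul_le (.inl ha) (.inl ENNReal.ofReal_ne_top)).2 (hrate T)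
    _ = ENNReal.ofReal (Λ * (C p : ℝ) / δp) := by
        rw [← ENNReal.ofReal_natCast, ← ENNReal.ofReal_div_of_pos (div_pos hδpos hΛ0)]
        congr 1
        field_simp

/-- Lemma D.1: hitting time of full capacity for the lower envelope. -/
theorem stmt19 (I : ℕ) (hI : 1 ≤ I) (C : Fin I → ℕ) (hC : ∀ i, 1 ≤ C i)
    (lam : Finset (Fin I) → ℝ) (hlamnn : ∀ A, 0 ≤ lam A) (hlam0 : lam ∅ = 0)
    (μv : ℝ) (hμv : 0 < μv)
    (Λ : ℝ) (hΛ : Λ = (∑ A : Finset (Fin I), lam A) + μv * ∑ i, (C i : ℝ))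
    (lamI : Fin I → ℝ)
    (hlamI : ∀ i, lamI i = ∑ A ∈ Finset.univ.filter (fun A => i ∈ A), lam A)
    (P : Measure (ℕ → Ev I)) [IsProbabilityMeasure P]
    (hiid : ∀ (T : Finset ℕ) (u : ℕ → Ev I),
        P {ω | ∀ t ∈ T, ω t = u t} = ∏ t ∈ T, probJ C lam μv Λ (u t))
    (p : Fin I) (δp : ℝ)
    (hδp : δp = lamI p - μv * ((∑ t ∈ Finset.univ.filter (fun t => t ≤ p), (C t : ℝ)) - 1))
    (hδpos : 0 < δp) :
    ∫⁻ ω, sInf {r : ℝ≥0∞ | ∃ t : ℕ, r = t ∧ (FenvIter C 0 C (fword ω t)).1 p = C p} ∂P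
      ≤ ENNReal.ofReal (Λ * (C p : ℝ) / δp) :=
  stmt19_general I C hC lam hlamnn μv hμv Λ hΛ lamI hlamI P hiid p δp hδp hδpos

end ATO
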